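/- Let X be a bounded geometry metric space with ULA_μ. Then for every ε > 0 the following holds: for all R > 0 there exists S > 0 such that for every finitely supported probability measure μ on X there exists a subset Ω ⊆ X with a decomposition Ω = ⊔_i Ω_i such that μ(Ω) ≥ 1/(1+ε), diam(Ω_i) ≤ S for all i, and d(Ω_i, Ω_j) > R for all i ≠ j. In particular X has the metric sparsification property. -/
import Mathlib


/-- `N_R(E)`, the `R`-neighbourhood of `E`. -/
def nbhd {X : Type*} [MetricSpace X] (R : ℝ) (E : Set X) : Set X :=
  {y | ∃ e ∈ E, dist y e ≤ R}

/-- `∂_R E = N_R(E) \ E`. -/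
def bdry {X : Type*} [MetricSpace X] (R : ℝ) (E : Set X) : Set X :=
  nbhd R E \ E

/-- Bounded geometry. -/
def BoundedGeometry (X : Type*) [MetricSpace X] : Prop :=
  ∀ R : ℝ, 0 < R → ∃ N : ℕ, ∀ x : X,
    {y | dist x y ≤ R}.Finite ∧ {y | dist x y ≤ R}.ncard ≤ N

/-- A probability measure on `X`, as a function. -/
def IsProbFn {X : Type*} (μ : X → ℝ) : Prop :=
  (∀ x, 0 ≤ μ x) ∧ Summable μ ∧ ∑' x, μ x = 1

/-- `μ(E)`. -/
noncomputable def measOf {X : Type*} (μ : X → ℝ) (E : Set X) : ℝ := ∑' x : E, μ x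

/-- Uniform local amenability. -/
def ULA (X : Type*) [MetricSpace X] : Prop :=
  ∀ R : ℝ, 0 < R → ∀ ε : ℝ, 0 < ε → ∃ S : ℝ, 0 < S ∧
    ∀ F : Set X, F.Finite → ∃ E : Set X, E.Finite ∧
      EMetric.diam E ≤ ENNReal.ofReal S ∧
      ((bdry R E ∩ F).ncard : ℝ) < ε * ((E ∩ F).ncard : ℝ)

/-- Measured uniform local amenability. -/
def ULAmu (X : Type*) [MetricSpace X] : Prop :=
  ∀ R : ℝ, 0 < R → ∀ ε : ℝ, 0 < ε → ∃ S : ℝ, 0 < S ∧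
    ∀ μ : X → ℝ, IsProbFn μ → ∃ E : Set X, E.Finite ∧
      EMetric.diam E ≤ ENNReal.ofReal S ∧
      measOf μ (bdry R E) < ε * measOf μ E

/-- Coarse embedding. -/
def CoarseEmbedding {X Y : Type*} [MetricSpace X] [MetricSpace Y] (f : X → Y) : Prop :=
  ∃ ρm ρp : ℝ → ℝ, Monotone ρm ∧ Monotone ρp ∧
    Filter.Tendsto ρm Filter.atTop Filter.atTop ∧
    ∀ x₁ x₂ : X, ρm (dist x₁ x₂) ≤ dist (f x₁) (f x₂) ∧
      dist (f x₁) (f x₂) ≤ ρp (dist x₁ x₂)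

/-- The metric sparsification property with constant $c$. -/
def MSPwith (X : Type*) [MetricSpace X] (c : ℝ) : Prop :=
  ∀ R : ℝ, 0 < R → ∃ S : ℝ, 0 < S ∧ ∀ μ : X → ℝ, IsProbFn μ →
    ∃ (ι : Type) (Ω : ι → Set X),
      (∀ i, EMetric.diam (Ω i) ≤ ENNReal.ofReal S) ∧
      (∀ i j, i ≠ j → ∀ a ∈ Ω i, ∀ b ∈ Ω j, R < dist a b) ∧
      c ≤ measOf μ (⋃ i, Ω i)

section helpers
variable {X : Type*}

lemma measOf_eq_ind (μ : X → ℝ) (E : Set X) : measOf μ E = ∑' x, E.indicator μ x :=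
  tsum_subtype E μ

lemma summable_ind {μ : X → ℝ} (h : (Function.support μ).Finite) (E : Set X) :
    Summable (E.indicator μ) := by
  apply summable_of_ne_finset_zero (s := h.toFinset)
  intro x hx
  have : μ x = 0 := by
    by_contra hc
    exact hx (h.mem_toFinset.mpr hc)
  simp [Set.indicator_apply, this]

lemma summable_fin {μ : X → ℝ} (h : (Function.support μ).Finite) : Summable μ := by
  apply summable_of_ne_finset_zero (s := h.toFinset)
  intro x hx
  by_contra hc
  exact hx (h.mem_toFinset.mpr hc)

lemma measOf_nonneg {μ : X → ℝ} (hμ : ∀ x, 0 ≤ μ x) (E : Set X) : 0 ≤ measOf μ E :=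
  tsum_nonneg fun x => hμ x

lemma measOf_union_disjoint {μ : X → ℝ} (h : (Function.support μ).Finite) {A B : Set X}
    (hd : Disjoint A B) : measOf μ (A ∪ B) = measOf μ A + measOf μ B := by
  rw [measOf_eq_ind, measOf_eq_ind, measOf_eq_ind, Set.indicator_union_of_disjoint hd]
  exact Summable.tsum_add (summable_ind h A) (summable_ind h B)

lemma measOf_mono {μ : X → ℝ} (h : (Function.support μ).Finite) (hμ : ∀ x, 0 ≤ μ x)
    {A B : Set X} (hAB : A ⊆ B) : measOf μ A ≤ measOf μ B := by
  rw [measOf_eq_ind, measOf_eq_ind]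
  exact Summable.tsum_le_tsum (fun x => Set.indicator_le_indicator_of_subset hAB hμ x)
    (summable_ind h A) (summable_ind h B)

lemma measOf_inter_support (μ : X → ℝ) (E : Set X) :
    measOf μ (E ∩ Function.support μ) = measOf μ E := by
  rw [measOf_eq_ind, measOf_eq_ind]
  refine tsum_congr fun x => ?_
  by_cases hs : μ x = 0
  · by_cases hE : x ∈ E <;> simp [Set.indicator_apply, hs, hE]
  · have hx : x ∈ Function.support μ := hs
    by_cases hE : x ∈ E
    · simp [Set.indicator_apply, hE, hx]
    · simp [Set.indicator_apply, hE]

variable [MetricSpace X]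

/-- Key recursive construction. -/
lemma key_lemma {R ε S : ℝ} (hR : 0 < R) (hε : 0 < ε)
    (hS : ∀ μ : X → ℝ, (∀ x, 0 ≤ μ x) ∧ Summable μ ∧ ∑' x, μ x = 1 →
      ∃ E : Set X, E.Finite ∧ EMetric.diam E ≤ ENNReal.ofReal S ∧
        measOf μ (bdry R E) < ε * measOf μ E) :
    ∀ n : ℕ, ∀ μ : X → ℝ, (∀ x, 0 ≤ μ x) → (Function.support μ).Finite →
      (Function.support μ).ncard ≤ n →
      ∃ (ι : Type) (Ω : ι → Set X),
        (∀ i, EMetric.diam (Ω i) ≤ ENNReal.ofReal S) ∧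
        (∀ i j, i ≠ j → ∀ a ∈ Ω i, ∀ b ∈ Ω j, R < dist a b) ∧
        (∀ i, Ω i ⊆ Function.support μ) ∧
        (∑' x, μ x) ≤ (1 + ε) * measOf μ (⋃ i, Ω i) := by
  intro n
  induction n with
  | zero =>
    intro μ hpos hfin hcard
    refine ⟨Empty, Empty.elim, fun i => i.elim, fun i => i.elim, fun i => i.elim, ?_⟩
    have hsupp : Function.support μ = ∅ :=
      (Set.ncard_eq_zero hfin).mp (Nat.le_zero.mp hcard)
    have hzero : μ = 0 := Function.support_eq_empty_iff.mp hsupp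
    simp [hzero, measOf]
  | succ n ih =>
    intro μ hpos hfin hcard
    set m := ∑' x, μ x with hm_def
    have hm0 : 0 ≤ m := tsum_nonneg hpos
    rcases eq_or_lt_of_le hm0 with hm | hm
    · refine ⟨Empty, Empty.elim, fun i => i.elim, fun i => i.elim, fun i => i.elim, ?_⟩
      rw [Set.iUnion_of_empty]
      have hempty : measOf μ (∅ : Set X) = 0 := by simp [measOf]
      rw [hempty, ← hm]
      simp
    · -- normalize
      set ν : X → ℝ := fun x => μ x / m with hν_def
      have hνprob : (∀ x, 0 ≤ ν x) ∧ Summable ν ∧ ∑' x, ν x = 1 := by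
        refine ⟨fun x => div_nonneg (hpos x) hm.le, ?_, ?_⟩
        · exact (summable_fin hfin).div_const m
        · rw [tsum_div_const, ← hm_def, div_self hm.ne']
      obtain ⟨E, hEfin, hEdiam, hEmeas⟩ := hS ν hνprob
      have hνmeas : ∀ F : Set X, measOf ν F = measOf μ F / m := by
        intro F
        simp only [measOf, hν_def]
        exact tsum_div_const
      have hkey : measOf μ (bdry R E) < ε * measOf μ E := by
        rw [hνmeas, hνmeas, ← mul_div_assoc] at hEmeas
        exact (div_lt_div_iff_of_pos_right hm).mp hEmeas
      have hEpos : 0 < measOf μ E := by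
        have h1 : 0 ≤ measOf μ (bdry R E) := measOf_nonneg hpos _
        nlinarith
      have hx0 : ∃ x ∈ E, μ x ≠ 0 := by
        by_contra hc
        push_neg at hc
        have : measOf μ E = 0 := by
          have h0 : measOf μ E = ∑' _ : E, (0 : ℝ) := tsum_congr fun x => hc x.1 x.2
          rw [h0, tsum_zero]
        linarith
      obtain ⟨x₀, hx₀E, hx₀⟩ := hx0
      set A := nbhd R E with hA_def
      set μ' : X → ℝ := Aᶜ.indicator μ with hμ'_def
      have hEsubA : E ⊆ A := fun e he => ⟨e, he, by simp [hR.le]⟩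
      have hsupp' : Function.support μ' = Aᶜ ∩ Function.support μ := Set.support_indicator
      have hfin' : (Function.support μ').Finite := by
        rw [hsupp']; exact hfin.subset Set.inter_subset_right
      have hx₀A : x₀ ∈ A := hEsubA hx₀E
      have hss : Function.support μ' ⊂ Function.support μ := by
        rw [Set.ssubset_iff_of_subset (by rw [hsupp']; exact Set.inter_subset_right)]
        exact ⟨x₀, hx₀, fun hc => (hsupp' ▸ hc).1 hx₀A⟩
      have hcard' : (Function.support μ').ncard ≤ n := by
        have := Set.ncard_lt_ncard hss hfin
        omega
      have hpos' : ∀ x, 0 ≤ μ' x := fun x => Set.indicator_apply_nonneg fun _ => hpos x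
      obtain ⟨ι', Ω', hd', hsep', hsub', hbound'⟩ := ih μ' hpos' hfin' hcard'
      refine ⟨Option ι', fun o => Option.elim o (E ∩ Function.support μ) Ω', ?_, ?_, ?_, ?_⟩
      · rintro (_ | i)
        · exact le_trans (EMetric.diam_mono Set.inter_subset_left) hEdiam
        · exact hd' i
      · have hsepEΩ : ∀ (j : ι'), ∀ a ∈ E ∩ Function.support μ, ∀ b ∈ Ω' j, R < dist a b := by
          intro j a ha b hb
          have hbA : b ∉ A := ((hsupp' ▸ hsub' j) hb).1
          have : ¬ (dist b a ≤ R) := fun hc => hbA ⟨a, ha.1, hc⟩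
          rw [dist_comm] at this
          linarith [not_le.mp this]
        rintro (_ | i) (_ | j) hij a ha b hb
        · exact absurd rfl hij
        · exact hsepEΩ j a ha b hb
        · rw [dist_comm]; exact hsepEΩ i b hb a ha
        · exact hsep' i j (by simpa using hij) a ha b hb
      · rintro (_ | i)
        · exact Set.inter_subset_right
        · exact subset_trans (hsub' i) (subset_trans (hsupp'.le) Set.inter_subset_right)
      · -- the measure bound
        have hU : (⋃ o : Option ι', Option.elim o (E ∩ Function.support μ) Ω') =
            (E ∩ Function.support μ) ∪ ⋃ i, Ω' i := Set.iUnion_option _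
        have hU'subAc : (⋃ i, Ω' i) ⊆ Aᶜ := by
          refine Set.iUnion_subset fun i => subset_trans (hsub' i) ?_
          rw [hsupp']; exact Set.inter_subset_left
        have hdisj : Disjoint (E ∩ Function.support μ) (⋃ i, Ω' i) :=
          Set.disjoint_of_subset (subset_trans Set.inter_subset_left hEsubA) hU'subAc
            disjoint_compl_right
        have hmeasU : measOf μ ((E ∩ Function.support μ) ∪ ⋃ i, Ω' i) =
            measOf μ E + measOf μ (⋃ i, Ω' i) := by
          rw [measOf_union_disjoint hfin hdisj, measOf_inter_support]
        have hμ'eq : measOf μ' (⋃ i, Ω' i) = measOf μ (⋃ i, Ω' i) := by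
          rw [measOf, measOf]
          exact tsum_congr fun x => Set.indicator_of_mem (hU'subAc x.2) μ
        -- split total mass
        have hsplit : m = measOf μ A + ∑' x, μ' x := by
          rw [measOf_eq_ind, hm_def, ← Summable.tsum_add (summable_ind hfin A) (summable_ind hfin Aᶜ)]
          refine tsum_congr fun x => ?_
          have := congrFun (Set.indicator_self_add_compl A μ) x
          simpa using this.symm
        have hAbound : measOf μ A ≤ (1 + ε) * measOf μ E := by
          have h1 : A ⊆ E ∪ bdry R E := by
            intro x hx
            by_cases hxE : x ∈ E
            · exact Or.inl hxE
            · exact Or.inr ⟨hx, hxE⟩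
          have h2 : Disjoint E (bdry R E) := Set.disjoint_sdiff_right
          have h3 : measOf μ (E ∪ bdry R E) = measOf μ E + measOf μ (bdry R E) :=
            measOf_union_disjoint hfin h2
          have h4 := measOf_mono hfin hpos h1
          nlinarith
        have hbound'' : ∑' x, μ' x ≤ (1 + ε) * measOf μ (⋃ i, Ω' i) := by
          rw [← hμ'eq]; exact hbound'
        rw [hU, hmeasU]
        nlinarith
end helpers

/-- Half of Theorem 3.8: $ULA_\mu$ implies the metric sparsification property.  More
precisely, for every $\epsilon > 0$ one gets the sparsification conclusion with constant
$1/(1+\epsilon)$ for all finitely supported probability measures; in particular $X$ has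
$MSP$. -/
theorem ulamu_implies_msp {X : Type*} [MetricSpace X] (hbg : BoundedGeometry X)
    (h : ULAmu X) :
    (∀ ε : ℝ, 0 < ε → ∀ R : ℝ, 0 < R → ∃ S : ℝ, 0 < S ∧
      ∀ μ : X → ℝ, IsProbFn μ → (Function.support μ).Finite →
        ∃ (ι : Type) (Ω : ι → Set X),
          (∀ i, EMetric.diam (Ω i) ≤ ENNReal.ofReal S) ∧
          (∀ i j, i ≠ j → ∀ a ∈ Ω i, ∀ b ∈ Ω j, R < dist a b) ∧
          1 / (1 + ε) ≤ measOf μ (⋃ i, Ω i)) ∧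
    (∃ c : ℝ, 0 < c ∧ MSPwith X c) := by
  have partA : ∀ ε : ℝ, 0 < ε → ∀ R : ℝ, 0 < R → ∃ S : ℝ, 0 < S ∧
      ∀ μ : X → ℝ, IsProbFn μ → (Function.support μ).Finite →
        ∃ (ι : Type) (Ω : ι → Set X),
          (∀ i, EMetric.diam (Ω i) ≤ ENNReal.ofReal S) ∧
          (∀ i j, i ≠ j → ∀ a ∈ Ω i, ∀ b ∈ Ω j, R < dist a b) ∧
          1 / (1 + ε) ≤ measOf μ (⋃ i, Ω i) := by
    intro ε hε R hR
    obtain ⟨S, hSpos, hS⟩ := h R hR ε hε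
    refine ⟨S, hSpos, ?_⟩
    intro μ hμ hfin
    obtain ⟨ι, Ω, hd, hsep, _, hbound⟩ :=
      key_lemma hR hε hS (Function.support μ).ncard μ hμ.1 hfin le_rfl
    refine ⟨ι, Ω, hd, hsep, ?_⟩
    rw [hμ.2.2] at hbound
    rw [div_le_iff₀ (by linarith : (0:ℝ) < 1 + ε)]
    linarith
  refine ⟨partA, ⟨1/4, by norm_num, ?_⟩⟩
  intro R hR
  obtain ⟨S, hSpos, hA⟩ := partA 1 one_pos R hR
  refine ⟨S, hSpos, ?_⟩
  intro μ hμ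
  have h1 : HasSum μ 1 := hμ.2.2 ▸ hμ.2.1.hasSum
  obtain ⟨s, hs⟩ : ∃ s : Finset X, 1/2 < ∑ x ∈ s, μ x :=
    (h1.eventually (eventually_gt_nhds (by norm_num : (1:ℝ)/2 < 1))).exists
  set t := ∑ x ∈ s, μ x with ht_def
  have htpos : 0 < t := lt_trans (by norm_num) hs
  classical
  set ν : X → ℝ := fun x => if x ∈ s then μ x / t else 0 with hν_def
  have hνzero : ∀ x ∉ s, ν x = 0 := fun x hx => if_neg hx
  have hνprob : IsProbFn ν := by
    refine ⟨fun x => ?_, summable_of_ne_finset_zero hνzero, ?_⟩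
    · by_cases hx : x ∈ s
      · simp only [hν_def, if_pos hx]; exact div_nonneg (hμ.1 x) htpos.le
      · simp [hν_def, if_neg hx]
    · rw [tsum_eq_sum hνzero]
      have : ∑ x ∈ s, ν x = ∑ x ∈ s, μ x / t :=
        Finset.sum_congr rfl fun x hx => if_pos hx
      rw [this, ← Finset.sum_div, ← ht_def, div_self htpos.ne']
  have hνfin : (Function.support ν).Finite := by
    apply Set.Finite.subset s.finite_toSet
    intro x hx
    by_contra hc
    exact hx (hνzero x hc)
  obtain ⟨ι, Ω, hd, hsep, hbound⟩ := hA ν hνprob hνfin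
  refine ⟨ι, Ω, hd, hsep, ?_⟩
  have hcompare : t * measOf ν (⋃ i, Ω i) ≤ measOf μ (⋃ i, Ω i) := by
    rw [measOf, measOf, ← tsum_mul_left]
    refine Summable.tsum_le_tsum (fun x => ?_) ?_ (hμ.2.1.subtype _)
    · by_cases hx : (x : X) ∈ s
      · simp only [hν_def, if_pos hx]
        rw [mul_div_cancel₀ _ htpos.ne']
      · simp only [hν_def, if_neg hx, mul_zero]
        exact hμ.1 _
    · exact Summable.mul_left t
        ((summable_of_ne_finset_zero hνzero : Summable ν).subtype _)
  have h2 : 1 / (1 + 1) ≤ measOf ν (⋃ i, Ω i) := hbound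
  have hν_nonneg : 0 ≤ measOf ν (⋃ i, Ω i) := tsum_nonneg fun x => hνprob.1 x
  nlinarith
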